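/- Let 𝒩 be a closed n-dimensional Riemannian manifold, x ∈ 𝒩, r > 0, and suppose the heat kernel satisfies ℋ(x,y,r^2) ≤ C r^{-n} e^{-d(x,y)^2/(5r^2)} for all y. Let Σ be an m-dimensional submanifold with area growth κ(Σ) = sup_{z,ρ} Area(Σ∩B_ρ(z))/ρ^m < ∞. Then F_{x,r^2}(Σ) = r^{n-m}∫_Σ ℋ(x,y,r^2) dy ≤ C'·κ(Σ), where C' depends only on n, m, and the constant C, provided additionally that for each k ≥ 0 the annulus A_k = {y : kr ≤ d(x,y) ≤ (k+1)r} can be covered by at most C k^{n-1} geodesic balls of radius r. -/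

import Mathlib

/-!
Split `Σ` into the annuli `A_k = {y : kr ≤ d(x,y) ≤ (k+1)r}`. On `A_k` the Gaussian bound gives
`ℋ(x,y,r²) ≤ C r^{-n} e^{-k²/5}`, and `A_k` is covered by `Ccov·k^{n-1}` closed balls of radius
`r`, each inside an open ball of radius `2r` and hence of area at most `κ(Σ)(2r)^m`. Summing,
`∫_Σ ℋ(x,y,r²) dy ≤ C 2^m κ(Σ) r^{m-n} ∑_k (1 + Ccov·k^{n-1}) e^{-k²/5}`, the series converges
since `e^{-k²/5} ≤ (e^{-1/5})^k`, and the factor `r^{n-m}` of `F` cancels `r^{m-n}`.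
-/

open MeasureTheory Metric

/-- The F-functional `F_{x,t}(Σ) = t^p ∫_Σ ℋ(x,y,t) dy`, `p = (n-m)/2`, the
submanifold `Σ` being represented by its area measure `μ`. -/
noncomputable def Ffunc {X : Type*} [MeasurableSpace X] (H : X → X → ℝ → ENNReal)
    (μ : Measure X) (p : ℝ) (x : X) (t : ℝ) : ENNReal :=
  ENNReal.ofReal (t ^ p) * ∫⁻ y, H x y t ∂μ

/-- The area growth `κ(Σ) = sup_{z, ρ>0} Area(Σ ∩ B_ρ(z)) / ρ^m`. -/
noncomputable def areaGrowth {X : Type*} [MetricSpace X] [MeasurableSpace X]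
    (μ : Measure X) (m : ℕ) : ENNReal :=
  ⨆ (z : X) (ρ : ℝ) (_ : 0 < ρ), μ (ball z ρ) / ENNReal.ofReal (ρ ^ m)

open Set
open scoped ENNReal

lemma lintegral_le_tsum_mul_measure {α ι : Type*} [MeasurableSpace α] [Countable ι]
    {μ : Measure α} {f : α → ℝ≥0∞} {s : ι → Set α} {a : ι → ℝ≥0∞}
    (hs : ⋃ i, s i = univ) (hf : ∀ i, ∀ y ∈ s i, f y ≤ a i) :
    ∫⁻ y, f y ∂μ ≤ ∑' i, a i * μ (s i) := by
  rw [← setLIntegral_univ, ← hs]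
  refine (lintegral_iUnion_le _ _).trans (ENNReal.tsum_le_tsum fun i => ?_)
  rw [← setLIntegral_const]
  exact setLIntegral_mono measurable_const (hf i)

def annulus {X : Type*} [PseudoMetricSpace X] (x : X) (r : ℝ) (k : ℕ) : Set X :=
  {y | (k : ℝ) * r ≤ dist x y ∧ dist x y ≤ ((k : ℝ) + 1) * r}

section Annulus

variable {X : Type*} [PseudoMetricSpace X] {x y : X} {r : ℝ}

lemma iUnion_annulus (hr : 0 < r) : ⋃ k, annulus x r k = univ := by
  refine eq_univ_of_forall fun y => mem_iUnion.mpr ⟨⌊dist x y / r⌋₊, ?_, ?_⟩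
  · rw [← le_div_iff₀ hr]
    exact Nat.floor_le (div_nonneg dist_nonneg hr.le)
  · rw [← div_le_iff₀ hr]
    exact (Nat.lt_floor_add_one _).le

lemma annulus_zero_subset_closedBall : annulus x r 0 ⊆ closedBall x r := fun y hy => by
  simpa [annulus, dist_comm] using hy.2

lemma exp_neg_dist_sq_le_of_mem_annulus (hr : 0 < r) {c : ℝ} (hc : 0 < c) {k : ℕ}
    (hy : y ∈ annulus x r k) :
    Real.exp (-(dist x y) ^ 2 / (c * r ^ 2)) ≤ Real.exp (-(k : ℝ) ^ 2 / c) := by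
  have hsq : ((k : ℝ) * r) ^ 2 ≤ dist x y ^ 2 := pow_le_pow_left₀ (by positivity) hy.1 2
  rw [Real.exp_le_exp, div_le_div_iff₀ (by positivity) hc]
  nlinarith

end Annulus

section AreaGrowth

variable {X : Type*} [MetricSpace X] [MeasurableSpace X] (μ : Measure X) (m : ℕ)

lemma measure_ball_le_areaGrowth_mul {ρ : ℝ} (hρ : 0 < ρ) (z : X) :
    μ (ball z ρ) ≤ areaGrowth μ m * ENNReal.ofReal (ρ ^ m) := by
  refine (ENNReal.div_le_iff_le_mul (Or.inl ?_) (Or.inl ENNReal.ofReal_ne_top)).mp ?_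
  · simpa using pow_pos hρ m
  · exact le_iSup_of_le z (le_iSup_of_le ρ (le_iSup_of_le hρ le_rfl))

lemma measure_closedBall_le_areaGrowth_mul {r : ℝ} (hr : 0 < r) (z : X) :
    μ (closedBall z r) ≤ areaGrowth μ m * ENNReal.ofReal ((2 * r) ^ m) :=
  (measure_mono (closedBall_subset_ball (by linarith))).trans
    (measure_ball_le_areaGrowth_mul μ m (by positivity) z)

lemma measure_le_card_mul_of_subset_biUnion_closedBall {r : ℝ} (hr : 0 < r) {S : Set X}
    {s : Finset X} (hS : S ⊆ ⋃ z ∈ s, closedBall z r) :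
    μ S ≤ s.card * (areaGrowth μ m * ENNReal.ofReal ((2 * r) ^ m)) :=
  calc μ S ≤ ∑ z ∈ s, μ (closedBall z r) :=
        (measure_mono hS).trans (measure_biUnion_finset_le _ _)
    _ ≤ ∑ _z ∈ s, areaGrowth μ m * ENNReal.ofReal ((2 * r) ^ m) :=
      Finset.sum_le_sum fun z _ => measure_closedBall_le_areaGrowth_mul μ m hr z
    _ = s.card * (areaGrowth μ m * ENNReal.ofReal ((2 * r) ^ m)) := by
      rw [Finset.sum_const, nsmul_eq_mul]

/-- The summand `1` pays for `A_0`, for which no cover is assumed. -/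
lemma measure_annulus_le {x : X} {r : ℝ} (hr : 0 < r) {N : ℕ → ℝ≥0∞}
    (hcov : ∀ k : ℕ, 1 ≤ k → ∃ s : Finset X,
      (s.card : ℝ≥0∞) ≤ N k ∧ annulus x r k ⊆ ⋃ z ∈ s, closedBall z r) (k : ℕ) :
    μ (annulus x r k) ≤ (1 + N k) * (areaGrowth μ m * ENNReal.ofReal ((2 * r) ^ m)) := by
  rcases Nat.eq_zero_or_pos k with rfl | hk
  · calc μ (annulus x r 0) ≤ μ (closedBall x r) := measure_mono annulus_zero_subset_closedBall
      _ ≤ 1 * (areaGrowth μ m * ENNReal.ofReal ((2 * r) ^ m)) := by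
        rw [one_mul]; exact measure_closedBall_le_areaGrowth_mul μ m hr x
      _ ≤ _ := by gcongr; exact le_self_add
  · obtain ⟨s, hcard, hsub⟩ := hcov k hk
    calc μ (annulus x r k) ≤ s.card * (areaGrowth μ m * ENNReal.ofReal ((2 * r) ^ m)) :=
          measure_le_card_mul_of_subset_biUnion_closedBall μ m hr hsub
      _ ≤ _ := by gcongr; exact hcard.trans le_add_self

lemma lintegral_le_of_le_gaussian {f : X → ℝ≥0∞} {x : X} {r c : ℝ} (hr : 0 < r) (hc : 0 < c)
    {B : ℝ≥0∞} (hf : ∀ y, f y ≤ B * ENNReal.ofReal (Real.exp (-(dist x y) ^ 2 / (c * r ^ 2))))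
    {N : ℕ → ℝ≥0∞} (hcov : ∀ k : ℕ, 1 ≤ k → ∃ s : Finset X,
      (s.card : ℝ≥0∞) ≤ N k ∧ annulus x r k ⊆ ⋃ z ∈ s, closedBall z r) :
    ∫⁻ y, f y ∂μ ≤ B * (areaGrowth μ m * ENNReal.ofReal ((2 * r) ^ m)) *
      ∑' k : ℕ, (1 + N k) * ENNReal.ofReal (Real.exp (-(k : ℝ) ^ 2 / c)) :=
  calc ∫⁻ y, f y ∂μ
      ≤ ∑' k : ℕ, B * ENNReal.ofReal (Real.exp (-(k : ℝ) ^ 2 / c)) * μ (annulus x r k) :=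
        lintegral_le_tsum_mul_measure (iUnion_annulus hr) fun k y hy => (hf y).trans <|
          mul_le_mul_right (ENNReal.ofReal_le_ofReal
            (exp_neg_dist_sq_le_of_mem_annulus hr hc hy)) _
    _ ≤ ∑' k : ℕ, B * ENNReal.ofReal (Real.exp (-(k : ℝ) ^ 2 / c)) *
          ((1 + N k) * (areaGrowth μ m * ENNReal.ofReal ((2 * r) ^ m))) :=
        ENNReal.tsum_le_tsum fun k => by gcongr; exact measure_annulus_le μ m hr hcov k
    _ = _ := by rw [← ENNReal.tsum_mul_left]; exact tsum_congr fun k => by ring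

end AreaGrowth

lemma summable_pow_mul_exp_neg_sq_div (j : ℕ) {c : ℝ} (hc : 0 < c) :
    Summable fun k : ℕ => (k : ℝ) ^ j * Real.exp (-(k : ℝ) ^ 2 / c) := by
  have hq : ‖Real.exp (-1 / c)‖ < 1 := by
    rw [Real.norm_of_nonneg (Real.exp_nonneg _), Real.exp_lt_one_iff]
    exact div_neg_of_neg_of_pos (by norm_num) hc
  refine (summable_pow_mul_geometric_of_norm_lt_one j hq).of_nonneg_of_le
    (fun k => by positivity) fun k => ?_
  gcongr
  rw [← Real.exp_nat_mul, Real.exp_le_exp, mul_div_assoc', mul_neg_one, neg_div, neg_div,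
    neg_le_neg_iff]
  gcongr
  exact_mod_cast Nat.le_self_pow two_ne_zero k

lemma tsum_pow_mul_ofReal_exp_neg_sq_div_ne_top (j : ℕ) {c : ℝ} (hc : 0 < c) :
    ∑' k : ℕ, (k : ℝ≥0∞) ^ j * ENNReal.ofReal (Real.exp (-(k : ℝ) ^ 2 / c)) ≠ ∞ := by
  convert ENNReal.ofReal_ne_top (r := ∑' k : ℕ, (k : ℝ) ^ j * Real.exp (-(k : ℝ) ^ 2 / c))
  rw [ENNReal.ofReal_tsum_of_nonneg (fun k => by positivity)
    (summable_pow_mul_exp_neg_sq_div j hc)]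
  refine tsum_congr fun k => ?_
  rw [ENNReal.ofReal_mul (by positivity), ENNReal.ofReal_pow (by positivity),
    ENNReal.ofReal_natCast]

lemma tsum_one_add_mul_pow_mul_ofReal_exp_ne_top {a : ℝ≥0∞} (ha : a ≠ ∞) (j : ℕ) {c : ℝ}
    (hc : 0 < c) :
    ∑' k : ℕ, (1 + a * (k : ℝ≥0∞) ^ j) * ENNReal.ofReal (Real.exp (-(k : ℝ) ^ 2 / c)) ≠ ∞ := by
  simp_rw [add_mul, one_mul, mul_assoc]
  rw [ENNReal.tsum_add, ENNReal.tsum_mul_left]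
  have h0 := tsum_pow_mul_ofReal_exp_neg_sq_div_ne_top 0 hc
  simp only [pow_zero, one_mul] at h0
  exact ENNReal.add_ne_top.mpr
    ⟨h0, ENNReal.mul_ne_top ha (tsum_pow_mul_ofReal_exp_neg_sq_div_ne_top j hc)⟩

lemma ofReal_sq_rpow_mul_ofReal_two_mul_pow {r : ℝ} (hr : 0 < r) (n m : ℕ) :
    ENNReal.ofReal ((r ^ 2) ^ (((n : ℝ) - m) / 2)) * ENNReal.ofReal ((2 * r) ^ m) =
      2 ^ m * ENNReal.ofReal (r ^ n) := by
  have h : (r ^ 2) ^ (((n : ℝ) - m) / 2) * r ^ m = r ^ n := by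
    rw [← Real.rpow_natCast r 2, ← Real.rpow_mul hr.le, ← Real.rpow_natCast r m,
      ← Real.rpow_add hr, ← Real.rpow_natCast r n]
    congr 1
    push_cast
    ring
  rw [← ENNReal.ofReal_mul (by positivity), mul_pow, mul_left_comm, h,
    ENNReal.ofReal_mul (by positivity), ENNReal.ofReal_pow zero_le_two, ENNReal.ofReal_ofNat]

/-- Area growth bounds the F-functional: on a closed `n`-manifold, if the heat
kernel satisfies the Gaussian upper bound `ℋ(x,y,r²) ≤ C r^{-n} e^{-d(x,y)²/(5r²)}`
and each annulus `A_k = {y : kr ≤ d(x,y) ≤ (k+1)r}`, `k ≥ 1`, can be covered by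
at most `Ccov·k^{n-1}` geodesic balls of radius `r`, then
`F_{x,r²}(Σ) ≤ C'·κ(Σ)` for every `m`-dimensional submanifold `Σ` of finite area
growth, with `C'` depending only on `n`, `m` and the constants `C`, `Ccov`. -/
theorem stmt_5 (n m : ℕ) (C Ccov : ENNReal) (hC : C ≠ ⊤) (hCcov : Ccov ≠ ⊤) :
    ∃ C' : ENNReal, C' ≠ ⊤ ∧
      ∀ (X : Type) (_ : MetricSpace X) (_ : MeasurableSpace X)
        (H : X → X → ℝ → ENNReal) (μ : Measure X) (x : X) (r : ℝ), 0 < r →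
        (∀ y : X, H x y (r ^ 2) ≤
          C * (ENNReal.ofReal (r ^ n))⁻¹ *
            ENNReal.ofReal (Real.exp (-(dist x y) ^ 2 / (5 * r ^ 2)))) →
        areaGrowth μ m ≠ ⊤ →
        (∀ k : ℕ, 1 ≤ k → ∃ s : Finset X,
          (s.card : ENNReal) ≤ Ccov * (k : ENNReal) ^ (n - 1) ∧
          {y : X | (k : ℝ) * r ≤ dist x y ∧ dist x y ≤ ((k : ℝ) + 1) * r} ⊆
            ⋃ z ∈ s, closedBall z r) →
        Ffunc H μ (((n : ℝ) - m) / 2) x (r ^ 2) ≤ C' * areaGrowth μ m := by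
  set T := ∑' k : ℕ,
    (1 + Ccov * (k : ℝ≥0∞) ^ (n - 1)) * ENNReal.ofReal (Real.exp (-(k : ℝ) ^ 2 / 5))
  refine ⟨C * 2 ^ m * T, ENNReal.mul_ne_top (ENNReal.mul_ne_top hC (by simp))
    (tsum_one_add_mul_pow_mul_ofReal_exp_ne_top hCcov _ (by norm_num)), ?_⟩
  intro X _ _ H μ x r hr hH _ hcov
  have hint := lintegral_le_of_le_gaussian μ m hr (by norm_num : (0 : ℝ) < 5) hH hcov
  calc Ffunc H μ (((n : ℝ) - m) / 2) x (r ^ 2)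
      = ENNReal.ofReal ((r ^ 2) ^ (((n : ℝ) - m) / 2)) * ∫⁻ y, H x y (r ^ 2) ∂μ := rfl
    _ ≤ ENNReal.ofReal ((r ^ 2) ^ (((n : ℝ) - m) / 2)) * (C * (ENNReal.ofReal (r ^ n))⁻¹ *
          (areaGrowth μ m * ENNReal.ofReal ((2 * r) ^ m)) * T) := by
        gcongr
    _ = C * T * areaGrowth μ m * (ENNReal.ofReal ((r ^ 2) ^ (((n : ℝ) - m) / 2)) *
          ENNReal.ofReal ((2 * r) ^ m)) * (ENNReal.ofReal (r ^ n))⁻¹ := by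
        ring
    _ = C * 2 ^ m * T * areaGrowth μ m *
          (ENNReal.ofReal (r ^ n) * (ENNReal.ofReal (r ^ n))⁻¹) := by
        rw [ofReal_sq_rpow_mul_ofReal_two_mul_pow hr n m]; ring
    _ = C * 2 ^ m * T * areaGrowth μ m := by
        rw [ENNReal.mul_inv_cancel (by simpa using pow_pos hr n) ENNReal.ofReal_ne_top, mul_one]
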